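/- In a finite connected block graph G, for any two vertices x and y there is exactly one induced x-y path in G. -/

import Mathlib

/-- `d` is a metric on `X`. -/
def IsMetric {X : Type*} (d : X → X → ℝ) : Prop :=
  (∀ x y, d x y = 0 ↔ x = y) ∧ (∀ x y, d x y = d y x) ∧ ∀ x y z, d x z ≤ d x y + d y z

/-- Betweenness relation of the distance function `d`. -/
def btw {X : Type*} (d : X → X → ℝ) (x y z : X) : Prop :=
  d x z = d x y + d y z

/-- The adjacency graph of a distance function `d` (symmetrized form; coincides with the
usual one when `d` is a metric): `x ~ z` iff no third point lies between them. -/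
def adjGraphD {X : Type*} (d : X → X → ℝ) : SimpleGraph X where
  Adj x z := x ≠ z ∧ ∀ y, y ≠ x → y ≠ z → d x z ≠ d x y + d y z ∧ d z x ≠ d z y + d y x
  symm := by
    refine ⟨?_⟩
    rintro x z ⟨hxz, h⟩
    exact ⟨hxz.symm, fun y hyz hyx => ⟨(h y hyx hyz).2, (h y hyx hyz).1⟩⟩
  loopless := ⟨fun x h => h.1 rfl⟩

/-- Betweenness relation of the shortest-path metric of a graph `G`. -/
def gBtw {V : Type*} (G : SimpleGraph V) (x y z : V) : Prop :=
  G.dist x z = G.dist x y + G.dist y z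

/-- A walk is induced if the only edges of `G` between its vertices are its own edges. -/
def InducedWalk {V : Type*} (G : SimpleGraph V) {x y : V} (p : G.Walk x y) : Prop :=
  ∀ a ∈ p.support, ∀ b ∈ p.support, G.Adj a b → s(a, b) ∈ p.edges

/-- A block graph: connected, and every cycle induces a complete subgraph. -/
def IsBlockGraph {V : Type*} (G : SimpleGraph V) : Prop :=
  G.Connected ∧ ∀ (v : V) (p : G.Walk v v), p.IsCycle →
    ∀ x ∈ p.support, ∀ y ∈ p.support, x ≠ y → G.Adj x y

/-- Distance-hereditary: every connected induced subgraph is isometric. -/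
def DistHereditary {V : Type*} (G : SimpleGraph V) : Prop :=
  ∀ S : Set V, (G.induce S).Connected → ∀ u v : S, (G.induce S).dist u v = G.dist u v

/-! A shortest path is induced, which gives existence. Two distinct paths with the same ends
contain subpaths `p`, `q` between two vertices `u`, `v` that close up into a cycle. In a block
graph `u` and `v` are then adjacent, so induced subpaths `p`, `q` are both the single edge `uv`,
and the cycle would have length 2. -/

open SimpleGraph Walk

section

variable {V : Type*} {G : SimpleGraph V}

lemma inducedWalk_reverse {u v : V} {p : G.Walk u v} :
    InducedWalk G p.reverse ↔ InducedWalk G p := by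
  simp [InducedWalk]

namespace InducedWalk

lemma of_append_left {u v w : V} {p : G.Walk u v} {q : G.Walk v w}
    (hpq : (p.append q).IsPath) (hi : InducedWalk G (p.append q)) : InducedWalk G p := by
  intro a ha b hb hab
  have hedge := hi a (by simp [ha]) b (by simp [hb]) hab
  rw [edges_append, List.mem_append] at hedge
  refine hedge.resolve_right fun hedge => hab.ne ?_
  have hjunction : ∀ c ∈ p.support, c ∈ q.support → c = v := fun c hcp hcq => by
    by_contra hcv
    exact hpq.ne_of_mem_support_of_append hcv hcp hcq rfl
  rw [hjunction a ha (q.fst_mem_support_of_mem_edges hedge),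
    hjunction b hb (q.snd_mem_support_of_mem_edges hedge)]

lemma of_append_right {u v w : V} {p : G.Walk u v} {q : G.Walk v w}
    (hpq : (p.append q).IsPath) (hi : InducedWalk G (p.append q)) : InducedWalk G q := by
  rw [← isPath_reverse_iff, reverse_append] at hpq
  rw [← inducedWalk_reverse, reverse_append] at hi
  exact inducedWalk_reverse.mp (hi.of_append_left hpq)

lemma of_isSubwalk {u v u' v' : V} {p : G.Walk u v} {q : G.Walk u' v'}
    (hq : q.IsPath) (hi : InducedWalk G q) (hpq : p.IsSubwalk q) : InducedWalk G p := by
  obtain ⟨r, s, rfl⟩ := hpq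
  exact (hi.of_append_left hq).of_append_right hq.of_append_left

lemma length_eq_one_of_adj {u v : V} {p : G.Walk u v} (hp : p.IsPath)
    (hi : InducedWalk G p) (huv : G.Adj u v) : p.length = 1 :=
  hp.length_eq_one_of_mem_edges (hi u p.start_mem_support v p.end_mem_support huv)

lemma cons {x a y : V} {h : G.Adj x a} {p : G.Walk a y} (hi : InducedWalk G p)
    (hx : ∀ v ∈ p.support, G.Adj x v → v = a) : InducedWalk G (p.cons h) := by
  have hxedge : ∀ v ∈ p.support, G.Adj x v → s(x, v) ∈ (p.cons h).edges := fun v hv hxv => by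
    simp [hx v hv hxv]
  intro u hu v hv huv
  rw [support_cons, List.mem_cons] at hu hv
  rcases hu with rfl | hu <;> rcases hv with rfl | hv
  · exact absurd huv (G.loopless.irrefl _)
  · exact hxedge v hv huv
  · exact Sym2.eq_swap ▸ hxedge u hu huv.symm
  · exact List.mem_cons_of_mem _ (hi u hu v hv huv)

theorem eq_of_isPath
    (hcyc : ∀ (v : V) (c : G.Walk v v), c.IsCycle →
      ∀ a ∈ c.support, ∀ b ∈ c.support, a ≠ b → G.Adj a b)
    {x y : V} {P Q : G.Walk x y} (hP : P.IsPath) (hPi : InducedWalk G P)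
    (hQ : Q.IsPath) (hQi : InducedWalk G Q) : P = Q := by
  by_contra hPQ
  obtain ⟨u, v, p, q, hpP, hqQ, hc⟩ := hP.exists_isCycle_of_ne hQ hPQ
  have hp : p.IsPath := isPath_of_isSubwalk hpP hP
  have hq : q.IsPath := isPath_of_isSubwalk hqQ hQ
  have hlen := hc.three_le_length
  rw [length_append, length_reverse] at hlen
  have huv : u ≠ v := by
    rintro rfl
    rw [(isPath_iff_nil.mp hp).length_eq_zero, (isPath_iff_nil.mp hq).length_eq_zero] at hlen
    omega
  have hadj : G.Adj u v := hcyc u _ hc u (start_mem_support _) v (by simp) huv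
  have hp1 := (hPi.of_isSubwalk hP hpP).length_eq_one_of_adj hp hadj
  have hq1 := (hQi.of_isSubwalk hQ hqQ).length_eq_one_of_adj hq hadj
  omega

end InducedWalk

lemma inducedWalk_of_forall_length_le [DecidableEq V] {x y : V} (p : G.Walk x y)
    (hmin : ∀ w : G.Walk x y, p.length ≤ w.length) : InducedWalk G p := by
  induction p with
  | nil =>
    intro u hu v hv huv
    rw [mem_support_nil_iff] at hu hv
    exact absurd (hu ▸ hv ▸ huv) (G.loopless.irrefl _)
  | @cons x a y h q ih =>
    refine (ih fun w => by simpa using hmin (w.cons h)).cons fun v hv hxv => ?_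
    by_contra hva
    have hshort := hmin ((q.dropUntil v hv).cons hxv)
    have := length_dropUntil_lt_length hv hva
    simp only [length_cons] at hshort
    omega

end

theorem stmt_6_general {V : Type*} (G : SimpleGraph V) (hG : IsBlockGraph G)
    (x y : V) :
    ∃! p : G.Walk x y, p.IsPath ∧ InducedWalk G p := by
  classical
  obtain ⟨hconn, hcyc⟩ := hG
  obtain ⟨p, hp, hlen⟩ := hconn.exists_path_of_dist x y
  have hpi : InducedWalk G p := inducedWalk_of_forall_length_le p fun w => hlen ▸ dist_le w
  exact ⟨p, ⟨hp, hpi⟩, fun q ⟨hq, hqi⟩ => InducedWalk.eq_of_isPath hcyc hq hqi hp hpi⟩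

/-- In a finite connected block graph, any two vertices are joined by exactly one
induced path. -/
theorem stmt_6 {V : Type*} [Fintype V] (G : SimpleGraph V) (hG : IsBlockGraph G)
    (x y : V) :
    ∃! p : G.Walk x y, p.IsPath ∧ InducedWalk G p :=
  stmt_6_general G hG x y
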